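/- Let T be a tree with (T, S) ∈ 𝒯 for some labeling S, and let v be a leaf of T. Then there exists a set X ⊆ V(T) with |X| = γ_t(T) − 1 such that v ∈ X and every vertex of T except v has a neighbor in X. -/

import Mathlib

open SimpleGraph

/-- `S` is a super dominating set of `G`: every vertex `u ∉ S` has some `v ∈ S`
with `N(v) ∩ Sᶜ = {u}`. -/
def SuperDomSet {V : Type} (G : SimpleGraph V) (S : Set V) : Prop :=
  ∀ u ∈ Sᶜ, ∃ v ∈ S, G.neighborSet v ∩ Sᶜ = {u}

/-- The super domination number `γ_sp(G)`. -/
noncomputable def superDomNum {V : Type} (G : SimpleGraph V) : ℕ :=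
  sInf {n | ∃ S : Set V, SuperDomSet G S ∧ S.ncard = n}

/-- `S` is a dominating set of `G`. -/
def DomSet {V : Type} (G : SimpleGraph V) (S : Set V) : Prop :=
  ∀ u ∉ S, ∃ v ∈ S, G.Adj v u

/-- The domination number `γ(G)`. -/
noncomputable def domNum {V : Type} (G : SimpleGraph V) : ℕ :=
  sInf {n | ∃ S : Set V, DomSet G S ∧ S.ncard = n}

/-- `S` is a total dominating set of `G`: every vertex has a neighbor in `S`. -/
def TotalDomSet {V : Type} (G : SimpleGraph V) (S : Set V) : Prop :=
  ∀ u : V, ∃ v ∈ S, G.Adj v u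

/-- The total domination number `γ_t(G)`. -/
noncomputable def totalDomNum {V : Type} (G : SimpleGraph V) : ℕ :=
  sInf {n | ∃ S : Set V, TotalDomSet G S ∧ S.ncard = n}

/-- A leaf is a vertex of degree 1. -/
def IsLeaf {V : Type} (G : SimpleGraph V) (v : V) : Prop :=
  (G.neighborSet v).ncard = 1

/-- A support vertex is a vertex adjacent to a leaf. -/
def IsSupport {V : Type} (G : SimpleGraph V) (v : V) : Prop :=
  ∃ u, G.Adj v u ∧ IsLeaf G u

/-- Attach a path `u₁u₂u₃u₄u₅u₆` (indices `0,…,5`) to `G` together with the edge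
joining `u₃` (index `2`) to `v`. -/
def attachPath6 {V : Type} (G : SimpleGraph V) (v : V) : SimpleGraph (V ⊕ Fin 6) where
  Adj x y :=
    match x, y with
    | Sum.inl a, Sum.inl b => G.Adj a b
    | Sum.inl a, Sum.inr i => a = v ∧ (i : ℕ) = 2
    | Sum.inr i, Sum.inl a => a = v ∧ (i : ℕ) = 2
    | Sum.inr i, Sum.inr j => (SimpleGraph.pathGraph 6).Adj i j
  symm := ⟨by
    rintro (a | i) (b | j) h
    · exact h.symm
    · exact h
    · exact h
    · exact (SimpleGraph.pathGraph 6).symm.symm _ _ h⟩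
  loopless := ⟨by
    rintro (a | i) h
    · exact G.loopless.irrefl a h
    · exact (SimpleGraph.pathGraph 6).loopless.irrefl i h⟩

/-- Vertex statuses for labeled trees. -/
inductive Status : Type
  | A | B | C
deriving DecidableEq

/-- The labeling of the (attached or base) path `P₆`: statuses `C,A,B,B,A,C`. -/
def pathLabel : Fin 6 → Status := fun i =>
  if (i : ℕ) = 0 ∨ (i : ℕ) = 5 then Status.C
  else if (i : ℕ) = 1 ∨ (i : ℕ) = 4 then Status.A
  else Status.B

/-- The family 𝒯 of labeled trees: it contains `(P₆, S₀)` (leaves labeled `C`,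
support vertices labeled `A`, middle vertices labeled `B`) and is closed under
operation 𝒪: for a vertex `v` of status `B`, attach a path `u₁…u₆` by the edge
`u₃v`, labeling `u₁,…,u₆` with `C,A,B,B,A,C`. -/
inductive InT : (W : Type) → SimpleGraph W → (W → Status) → Prop
  | base : InT (Fin 6) (SimpleGraph.pathGraph 6) pathLabel
  | step {W : Type} {G : SimpleGraph W} {L : W → Status} (h : InT W G L)
      (v : W) (hv : L v = Status.B) :
      InT (W ⊕ Fin 6) (attachPath6 G v)
        (fun x => match x with | Sum.inl a => L a | Sum.inr i => pathLabel i)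

/-!
Each tree of 𝒯 is a union of `k` copies of `P₆`, so it has `6k` vertices. The vertices labelled
`A` or `C` of a copy `u₁ ⋯ u₆` have all their neighbours inside that copy: dominating `u₁` and `u₆`
forces `u₂` and `u₅`, and dominating `u₂` and `u₅` forces one vertex of `{u₁, u₃}` and one of
`{u₄, u₆}`. Hence a set dominating just the non-`B` vertices has at least `4k` elements, while
`u₂u₃u₄u₅` from every copy is a total dominating set; so `γ_t = 4k`. For a leaf, say the `u₁` of
its copy, replacing `u₂u₃u₄u₅` by `u₁u₄u₅` in that copy dominates every vertex except `u₁`.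
-/

open SimpleGraph Set Sum

instance (n : ℕ) : DecidableRel (pathGraph n).Adj := fun _ _ => decidable_of_iff' _ pathGraph_adj

def TotallyDominates {V : Type} (G : SimpleGraph V) (X s : Set V) : Prop :=
  ∀ u ∈ s, ∃ w ∈ X, G.Adj u w

lemma totalDomSet_iff_totallyDominates_univ {V : Type} {G : SimpleGraph V} {D : Set V} :
    TotalDomSet G D ↔ TotallyDominates G D univ :=
  ⟨fun h u _ => (h u).imp fun _ hw => ⟨hw.1, hw.2.symm⟩,
    fun h u => (h u trivial).imp fun _ hw => ⟨hw.1, hw.2.symm⟩⟩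

lemma ncard_inl_image_union_inr_image {α β : Type} [Finite α] [Finite β]
    (S : Set α) (T : Set β) :
    (inl '' S ∪ inr '' T : Set (α ⊕ β)).ncard = S.ncard + T.ncard := by
  rw [ncard_union_eq (by simp [Set.disjoint_left]) (toFinite _) (toFinite _),
    ncard_image_of_injective _ inl_injective, ncard_image_of_injective _ inr_injective]

section PathGraphSix

lemma pathGraph_six_exists_totallyDominates :
    ∃ P : Set (Fin 6), P.ncard = 4 ∧ TotallyDominates (pathGraph 6) P univ := by
  obtain ⟨P, hcard, hP⟩ : ∃ P : Finset (Fin 6), P.card = 4 ∧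
      ∀ i, ∃ j ∈ P, (pathGraph 6).Adj i j := by decide
  exact ⟨P, by rw [ncard_coe_finset, hcard], fun i _ => hP i⟩

lemma pathGraph_six_exists_totallyDominates_compl_singleton {i : Fin 6}
    (hi : pathLabel i = Status.C) :
    ∃ P : Set (Fin 6), i ∈ P ∧ P.ncard = 3 ∧ TotallyDominates (pathGraph 6) P {i}ᶜ := by
  obtain ⟨P, hiP, hcard, hP⟩ : ∃ P : Finset (Fin 6), i ∈ P ∧ P.card = 3 ∧
      ∀ j, j ≠ i → ∃ k ∈ P, (pathGraph 6).Adj j k := by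
    revert i; decide
  exact ⟨P, hiP, by rw [ncard_coe_finset, hcard], hP⟩

lemma pathGraph_six_four_le_ncard {P : Set (Fin 6)}
    (hP : TotallyDominates (pathGraph 6) P {i | pathLabel i ≠ Status.B}) : 4 ≤ P.ncard := by
  have key : ∀ P : Finset (Fin 6),
      (∀ i, pathLabel i ≠ Status.B → ∃ j ∈ P, (pathGraph 6).Adj i j) → 4 ≤ P.card := by
    decide
  rw [ncard_eq_toFinset_card P]
  exact key _ fun i hi => by simpa using hP i hi

lemma pathGraph_six_two_le_ncard_neighborSet {i : Fin 6} (hi : pathLabel i ≠ Status.C) :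
    2 ≤ ((pathGraph 6).neighborSet i).ncard := by
  rw [← Nat.card_coe_set_eq, Nat.card_eq_fintype_card, card_neighborSet_eq_degree]
  revert i; decide

end PathGraphSix

section AttachPath6

variable {V : Type} {G : SimpleGraph V} {v : V}

lemma TotallyDominates.inl_image_union_inr_image {S : Set V} {P : Set (Fin 6)}
    {s : Set (V ⊕ Fin 6)} (hS : TotallyDominates G S (inl ⁻¹' s))
    (hP : TotallyDominates (pathGraph 6) P (inr ⁻¹' s)) :
    TotallyDominates (attachPath6 G v) (inl '' S ∪ inr '' P) s := by
  rintro (a | i) hx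
  · obtain ⟨w, hw, hadj⟩ := hS a hx
    exact ⟨inl w, Or.inl (mem_image_of_mem _ hw), hadj⟩
  · obtain ⟨j, hj, hadj⟩ := hP i hx
    exact ⟨inr j, Or.inr (mem_image_of_mem _ hj), hadj⟩

lemma TotallyDominates.of_attachPath6_inl {D s : Set (V ⊕ Fin 6)}
    (h : TotallyDominates (attachPath6 G v) D s) (hv : v ∉ inl ⁻¹' s) :
    TotallyDominates G (inl ⁻¹' D) (inl ⁻¹' s) := by
  intro a ha
  obtain ⟨w | j, hw, hadj⟩ := h (inl a) ha
  · exact ⟨w, hw, hadj⟩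
  · obtain ⟨rfl, -⟩ := hadj
    exact absurd ha hv

lemma TotallyDominates.of_attachPath6_inr {D s : Set (V ⊕ Fin 6)}
    (h : TotallyDominates (attachPath6 G v) D s) (h2 : 2 ∉ inr ⁻¹' s) :
    TotallyDominates (pathGraph 6) (inr ⁻¹' D) (inr ⁻¹' s) := by
  intro i hi
  obtain ⟨w | j, hw, hadj⟩ := h (inr i) hi
  · obtain rfl : i = 2 := Fin.ext hadj.2
    exact absurd hi h2
  · exact ⟨j, hw, hadj⟩

lemma attachPath6_neighborSet_inl_of_ne {a : V} (ha : a ≠ v) :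
    (attachPath6 G v).neighborSet (inl a) = inl '' G.neighborSet a := by
  ext (b | i)
  · simp [attachPath6]
  · simp [attachPath6, ha]

variable [Finite V]

lemma ncard_neighborSet_le_attachPath6_inl (a : V) :
    (G.neighborSet a).ncard ≤ ((attachPath6 G v).neighborSet (inl a)).ncard := by
  rw [← ncard_image_of_injective _ inl_injective]
  exact ncard_le_ncard (by rintro _ ⟨b, hb, rfl⟩; exact hb)

lemma ncard_neighborSet_le_attachPath6_inr (i : Fin 6) :
    ((pathGraph 6).neighborSet i).ncard ≤ ((attachPath6 G v).neighborSet (inr i)).ncard := by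
  rw [← ncard_image_of_injective _ inr_injective]
  exact ncard_le_ncard (by rintro _ ⟨j, hj, rfl⟩; exact hj)

end AttachPath6

namespace InT

variable {W : Type} {G : SimpleGraph W} {L : W → Status}

lemma finite (h : InT W G L) : Finite W := by
  induction h with
  | base => infer_instance
  | step _ _ _ ih => infer_instance

lemma exists_totallyDominates_univ (h : InT W G L) :
    ∃ D : Set W, 3 * D.ncard = 2 * Nat.card W ∧ TotallyDominates G D univ := by
  induction h with
  | base =>
    obtain ⟨P, hcard, hP⟩ := pathGraph_six_exists_totallyDominates
    exact ⟨P, by rw [hcard, Nat.card_fin], hP⟩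
  | step h v _ ih =>
    have := h.finite
    obtain ⟨D, hcard, hD⟩ := ih
    obtain ⟨P, hPcard, hP⟩ := pathGraph_six_exists_totallyDominates
    refine ⟨inl '' D ∪ inr '' P, ?_, hD.inl_image_union_inr_image hP⟩
    rw [ncard_inl_image_union_inr_image, Nat.card_sum, Nat.card_fin]
    omega

lemma two_mul_card_le (h : InT W G L) {D : Set W}
    (hD : TotallyDominates G D {u | L u ≠ Status.B}) : 2 * Nat.card W ≤ 3 * D.ncard := by
  induction h with
  | base =>
    have := pathGraph_six_four_le_ncard hD
    rw [Nat.card_fin]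
    omega
  | step h v hv ih =>
    have := h.finite
    have hW := ih (hD.of_attachPath6_inl fun h => h hv)
    have hP := pathGraph_six_four_le_ncard (hD.of_attachPath6_inr fun h => h rfl)
    rw [← image_preimage_inl_union_image_preimage_inr D, ncard_inl_image_union_inr_image,
      Nat.card_sum, Nat.card_fin]
    omega

lemma two_le_ncard_neighborSet (h : InT W G L) {u : W} (hu : L u ≠ Status.C) :
    2 ≤ (G.neighborSet u).ncard := by
  induction h with
  | base => exact pathGraph_six_two_le_ncard_neighborSet hu
  | step h v _ ih =>
    have := h.finite
    rcases u with a | i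
    · exact (ih hu).trans (ncard_neighborSet_le_attachPath6_inl a)
    · exact (pathGraph_six_two_le_ncard_neighborSet hu).trans
        (ncard_neighborSet_le_attachPath6_inr i)

lemma label_eq_C_of_isLeaf (h : InT W G L) {u : W} (hu : IsLeaf G u) : L u = Status.C := by
  by_contra hC
  have := h.two_le_ncard_neighborSet hC
  rw [IsLeaf] at hu
  omega

lemma exists_almost_totallyDominates (h : InT W G L) {v : W} (hv : IsLeaf G v) :
    ∃ X : Set W, v ∈ X ∧ 3 * (X.ncard + 1) = 2 * Nat.card W ∧ TotallyDominates G X {v}ᶜ := by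
  induction h with
  | base =>
    obtain ⟨P, hvP, hcard, hP⟩ :=
      pathGraph_six_exists_totallyDominates_compl_singleton (InT.base.label_eq_C_of_isLeaf hv)
    exact ⟨P, hvP, by rw [hcard, Nat.card_fin], hP⟩
  | step h vatt hvatt ih =>
    have := h.finite
    have hC := (h.step vatt hvatt).label_eq_C_of_isLeaf hv
    rcases v with a | i
    · have ha : a ≠ vatt := by
        rintro rfl
        exact Status.noConfusion (hvatt.symm.trans hC)
      rw [IsLeaf, attachPath6_neighborSet_inl_of_ne ha,
        ncard_image_of_injective _ inl_injective] at hv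
      obtain ⟨X, haX, hcard, hX⟩ := ih hv
      obtain ⟨P, hPcard, hP⟩ := pathGraph_six_exists_totallyDominates
      refine ⟨inl '' X ∪ inr '' P, Or.inl (mem_image_of_mem _ haX), ?_,
        TotallyDominates.inl_image_union_inr_image (fun b hb => hX b (ne_of_apply_ne inl hb))
          (fun j _ => hP j trivial)⟩
      rw [ncard_inl_image_union_inr_image, Nat.card_sum, Nat.card_fin]
      omega
    · obtain ⟨D, hcard, hD⟩ := h.exists_totallyDominates_univ
      obtain ⟨P, hiP, hPcard, hP⟩ := pathGraph_six_exists_totallyDominates_compl_singleton hC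
      refine ⟨inl '' D ∪ inr '' P, Or.inr (mem_image_of_mem _ hiP), ?_,
        TotallyDominates.inl_image_union_inr_image (fun b _ => hD b trivial)
          (fun j hj => hP j (ne_of_apply_ne inr hj))⟩
      rw [ncard_inl_image_union_inr_image, Nat.card_sum, Nat.card_fin]
      omega

lemma three_mul_totalDomNum (h : InT W G L) : 3 * totalDomNum G = 2 * Nat.card W := by
  obtain ⟨D₀, hcard, hD₀⟩ := h.exists_totallyDominates_univ
  have hmem : D₀.ncard ∈ {n | ∃ S : Set W, TotalDomSet G S ∧ S.ncard = n} :=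
    ⟨D₀, totalDomSet_iff_totallyDominates_univ.2 hD₀, rfl⟩
  obtain ⟨D, hD, hDcard⟩ := Nat.sInf_mem ⟨_, hmem⟩
  have hle : totalDomNum G ≤ D₀.ncard := Nat.sInf_le hmem
  have hge := h.two_mul_card_le fun u _ => totalDomSet_iff_totallyDominates_univ.1 hD u trivial
  rw [totalDomNum] at hle ⊢
  omega

end InT

/-- For every leaf `v` of a tree `T` with `(T, S) ∈ 𝒯` there is a set `X` of
cardinality `γ_t(T) - 1` containing `v` such that every vertex except `v` has a
neighbor in `X`. -/
theorem InT_leaf_almost_totalDom {W : Type} {G : SimpleGraph W} {L : W → Status}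
    (h : InT W G L) (v : W) (hv : IsLeaf G v) :
    ∃ X : Set W, v ∈ X ∧ X.ncard = totalDomNum G - 1 ∧
      ∀ u : W, u ≠ v → ∃ w ∈ X, G.Adj u w := by
  obtain ⟨X, hvX, hcard, hX⟩ := h.exists_almost_totallyDominates hv
  have := h.three_mul_totalDomNum
  exact ⟨X, hvX, by omega, hX⟩
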